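/- Let G=(V,E) be a finite cubic simple graph (every vertex has degree 3) such that the energy function E is not constant on spin configurations, and let E_min be the minimum of E(S) over all S : V → {−1,1}. Then there exists a spin configuration S with E(S) > E_min and E(S) ≤ E_min + 8. In other words, the gap between the smallest and the second smallest value of E is at most 8. -/

import Mathlib

/-!
Flipping the spin at a vertex `k` changes only the field term at `k` and the three edge
terms at `k`, each by at most `2`, so it changes the energy by at most `8`. The spin
configurations form a hypercube connected by single flips, so walking from a ground state to
a configuration of different energy, one meets a ground state whose flip at some vertex
leaves the ground level; that flip has energy in `(Emin, Emin + 8]`.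
-/

open Finset

/-- The edge term `f k * f l` as a function on unordered pairs. -/
def edgeTerm {V : Type*} (f : V → ℤ) : Sym2 V → ℤ :=
  Sym2.lift ⟨fun k l => f k * f l, fun k l => by ring⟩

/-- `E(S) = ∑_{k∈V} S_k + ∑_{{k,l}∈E} S_k S_l`. -/
def En {V : Type*} [Fintype V] [DecidableEq V] (G : SimpleGraph V)
    [DecidableRel G.Adj] (S : V → ℤ) : ℤ :=
  (∑ k, S k) + ∑ e ∈ G.edgeFinset, edgeTerm S e

open Function

def IsSpin {V : Type*} (S : V → ℤ) : Prop := ∀ k, S k = -1 ∨ S k = 1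

lemma abs_sub_le_two_of_spin {a b : ℤ} (ha : a = -1 ∨ a = 1) (hb : b = -1 ∨ b = 1) :
    |a - b| ≤ 2 := by
  rcases ha with rfl | rfl <;> rcases hb with rfl | rfl <;> norm_num

namespace IsSpin

variable {V : Type*} {S : V → ℤ}

lemma flip [DecidableEq V] (hS : IsSpin S) (k : V) : IsSpin (update S k (-S k)) := by
  intro l
  rcases eq_or_ne l k with rfl | hl
  · rw [update_self]; rcases hS l with h | h <;> simp [h]
  · rw [update_of_ne hl]; exact hS l

lemma piecewise {S' : V → ℤ} (hS : IsSpin S) (hS' : IsSpin S') (s : Finset V)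
    [∀ l, Decidable (l ∈ s)] : IsSpin (s.piecewise S' S) :=
  fun l => s.piecewise_cases S' S (fun x => x = -1 ∨ x = 1) (hS' l) (hS l)

lemma edgeTerm (hS : IsSpin S) (e : Sym2 V) : edgeTerm S e = -1 ∨ edgeTerm S e = 1 := by
  induction e using Sym2.ind with
  | h a b =>
    rcases hS a with ha | ha <;> rcases hS b with hb | hb <;> simp [_root_.edgeTerm, ha, hb]

end IsSpin

section

variable {V : Type*} [DecidableEq V]

lemma edgeTerm_update_of_notMem (S : V → ℤ) {k : V} (x : ℤ) {e : Sym2 V} (hk : k ∉ e) :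
    edgeTerm (update S k x) e = edgeTerm S e := by
  induction e using Sym2.ind with
  | h a b =>
    rw [Sym2.mem_iff, not_or] at hk
    simp [edgeTerm, update_of_ne (Ne.symm hk.1), update_of_ne (Ne.symm hk.2)]

lemma abs_En_flip_sub_le [Fintype V] (G : SimpleGraph V) [DecidableRel G.Adj] {S : V → ℤ}
    (hS : IsSpin S) (k : V) :
    |En G (update S k (-S k)) - En G S| ≤ 2 * ((G.degree k : ℤ) + 1) := by
  set T := update S k (-S k)
  have hvertex : ∑ l, T l - ∑ l, S l = T k - S k := by
    rw [← sum_sub_distrib, sum_eq_single k (fun l _ hl => by simp [T, hl]) (by simp)]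
  have hedge : ∑ e ∈ G.edgeFinset, (edgeTerm T e - edgeTerm S e)
      = ∑ e ∈ G.incidenceFinset k, (edgeTerm T e - edgeTerm S e) := by
    rw [G.incidenceFinset_eq_filter, sum_filter_of_ne]
    intro e _ hne
    by_contra hk
    exact hne (by rw [edgeTerm_update_of_notMem _ _ hk, sub_self])
  have hdiff : En G T - En G S
      = (T k - S k) + ∑ e ∈ G.incidenceFinset k, (edgeTerm T e - edgeTerm S e) := by
    rw [← hedge, ← hvertex, sum_sub_distrib, En, En]
    ring
  calc |En G T - En G S|
      ≤ |T k - S k| + ∑ e ∈ G.incidenceFinset k, |edgeTerm T e - edgeTerm S e| := by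
        rw [hdiff]
        grw [abs_add_le, abs_sum_le_sum_abs]
    _ ≤ 2 + #(G.incidenceFinset k) • (2 : ℤ) := by
        gcongr
        · exact abs_sub_le_two_of_spin (hS.flip k k) (hS k)
        · exact sum_le_card_nsmul _ _ _ fun e _ =>
            abs_sub_le_two_of_spin ((hS.flip k).edgeTerm e) (hS.edgeTerm e)
    _ = 2 * ((G.degree k : ℤ) + 1) := by
        rw [G.card_incidenceFinset_eq_degree, nsmul_eq_mul]
        ring

lemma exists_flip_not_of_not [Fintype V] (Q : (V → ℤ) → Prop) {S S' : V → ℤ}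
    (hS : IsSpin S) (hS' : IsSpin S') (hQ : Q S) (hQ' : ¬ Q S') :
    ∃ T, IsSpin T ∧ Q T ∧ ∃ k, ¬ Q (update T k (-T k)) := by
  by_contra! hflip
  suffices ∀ s : Finset V, Q (s.piecewise S' S) from hQ' (by simpa using this univ)
  intro s
  induction s using Finset.induction_on with
  | empty => simpa using hQ
  | insert a s _ ih =>
    set T := s.piecewise S' S
    have hT : IsSpin T := hS.piecewise hS' s
    rw [piecewise_insert]
    rcases eq_or_ne (T a) (S' a) with h | h
    · rwa [← h, update_eq_self]
    · have hflipped : S' a = -T a := by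
        rcases hT a with h1 | h1 <;> rcases hS' a with h2 | h2 <;> omega
      rw [hflipped]
      exact hflip T hT ih a

end

/-- If the energy of a cubic graph is not constant on spin configurations,
then the gap between the smallest and the second smallest value of `E` is at
most 8: some configuration has energy strictly above, but within 8 of, the
minimum energy `Emin`. -/
theorem gap_le_eight {V : Type*} [Fintype V] [DecidableEq V]
    (G : SimpleGraph V) [DecidableRel G.Adj]
    (hcubic : ∀ k, G.degree k = 3)
    (hnonconst : ∃ S S' : V → ℤ, (∀ k, S k = -1 ∨ S k = 1) ∧
      (∀ k, S' k = -1 ∨ S' k = 1) ∧ En G S ≠ En G S')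
    (Emin : ℤ)
    (hmin : IsLeast {z : ℤ | ∃ S : V → ℤ,
      (∀ k, S k = -1 ∨ S k = 1) ∧ En G S = z} Emin) :
    ∃ S : V → ℤ, (∀ k, S k = -1 ∨ S k = 1) ∧
      Emin < En G S ∧ En G S ≤ Emin + 8 := by
  obtain ⟨S₀, hS₀, hE₀⟩ := hmin.1
  obtain ⟨S₁, hS₁, hE₁⟩ : ∃ S₁, IsSpin S₁ ∧ En G S₁ ≠ Emin := by
    obtain ⟨S, S', hS, hS', hne⟩ := hnonconst
    by_cases h : En G S = Emin
    · exact ⟨S', hS', h ▸ hne.symm⟩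
    · exact ⟨S, hS, h⟩
  obtain ⟨T, hT, hTmin, k, hk⟩ :=
    exists_flip_not_of_not (fun S => En G S = Emin) hS₀ hS₁ hE₀ hE₁
  refine ⟨_, hT.flip k, lt_of_le_of_ne (hmin.2 ⟨_, hT.flip k, rfl⟩) (Ne.symm hk), ?_⟩
  have hbound := abs_En_flip_sub_le G hT k
  rw [hcubic, hTmin, abs_le] at hbound
  norm_num at hbound
  linarith [hbound.2]
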